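/- Let U_s be the repulsive Coulomb potential on ℝ^{3M} with singular set S and minimal nonzero coefficient m, and let Ψ ∈ L²(ℝ^{3M};ℂ) with U_sΨ ∈ L²(ℝ^{3M};ℂ). Then for every δ > 0 and every v ∈ ℝ^{3M} with |v| ≤ δ, the following non-local no-concentration estimate holds: ∫_{{x : dist(x,S) ≤ δ}} |Ψ(x+v/2)| · |Ψ(x−v/2)| dx ≤ (16/m²) · δ² · ‖U_sΨ‖². -/

import Mathlib

/-!
If `dist(x, S) ≤ δ` and `|v| ≤ δ`, both points `x ± v/2` lie within `2δ` of a point of `S`, where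
two nuclei `α < β` with `C_{αβ} ≥ m` coincide; hence `|R_α − R_β| ≤ 4δ` there, so `U_s ≥ m/(4δ)` and
`|Ψ| ≤ (4δ/m) |U_s Ψ|` at both points (off the null set of nuclear collisions). Cauchy–Schwarz
together with translation invariance of Lebesgue measure bounds the integral by `(4δ/m)² ‖U_s Ψ‖²`.
-/

open MeasureTheory Filter
open scoped ENNReal

/-- The difference `R_α − R_β ∈ ℝ³` of the nuclear positions encoded in
`x = (R_1, …, R_M) ∈ ℝ^{3M}`. -/
noncomputable def Rdiff (M : ℕ) (x : EuclideanSpace ℝ (Fin M × Fin 3)) (α β : Fin M) :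
    EuclideanSpace ℝ (Fin 3) := WithLp.toLp 2 (fun j => x (α, j) - x (β, j))

/-- The repulsive Coulomb potential `U_s(x) = Σ_{α<β} C_{αβ}/|R_α−R_β|` on `ℝ^{3M}`
(real-valued; its values on the measure-zero singular set are irrelevant here). -/
noncomputable def coulombUs (M : ℕ) (C : Fin M → Fin M → ℝ)
    (x : EuclideanSpace ℝ (Fin M × Fin 3)) : ℝ :=
  ∑ q ∈ Finset.univ.filter (fun q : Fin M × Fin M => q.1 < q.2),
    C q.1 q.2 / ‖Rdiff M x q.1 q.2‖

/-- The singular set `S = {x : R_α = R_β for some α<β with C_{αβ} > 0}`. -/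
def singSet (M : ℕ) (C : Fin M → Fin M → ℝ) : Set (EuclideanSpace ℝ (Fin M × Fin 3)) :=
  {x | ∃ α β : Fin M, α < β ∧ 0 < C α β ∧ Rdiff M x α β = 0}

section Translation

variable {G E : Type*} [MeasurableSpace G] [AddGroup G] [MeasurableAdd G] {μ : Measure G}
  [μ.IsAddRightInvariant] [NormedAddCommGroup E]

theorem lintegral_enorm_comp_add_mul_le_eLpNorm_sq {f : G → E} (hf : AEStronglyMeasurable f μ)
    (a b : G) : ∫⁻ x, ‖f (x + a)‖ₑ * ‖f (x + b)‖ₑ ∂μ ≤ eLpNorm f 2 μ ^ 2 := by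
  have aemeasurable_translate (c : G) : AEMeasurable (fun x => ‖f (x + c)‖ₑ) μ :=
    hf.enorm.comp_quasiMeasurePreserving (measurePreserving_add_right μ c).quasiMeasurePreserving
  have eLpNorm_translate (c : G) :
      (∫⁻ x, ‖f (x + c)‖ₑ ^ (2 : ℝ) ∂μ) ^ (1 / (2 : ℝ)) = eLpNorm f 2 μ := by
    rw [lintegral_add_right_eq_self (fun y => ‖f y‖ₑ ^ (2 : ℝ)) c,
      eLpNorm_eq_lintegral_rpow_enorm_toReal two_ne_zero ENNReal.ofNat_ne_top]
    norm_num
  calc ∫⁻ x, ‖f (x + a)‖ₑ * ‖f (x + b)‖ₑ ∂μ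
      ≤ (∫⁻ x, ‖f (x + a)‖ₑ ^ (2 : ℝ) ∂μ) ^ (1 / (2 : ℝ)) *
          (∫⁻ x, ‖f (x + b)‖ₑ ^ (2 : ℝ) ∂μ) ^ (1 / (2 : ℝ)) :=
        ENNReal.lintegral_mul_le_Lp_mul_Lq μ .two_two (aemeasurable_translate a)
          (aemeasurable_translate b)
    _ = eLpNorm f 2 μ ^ 2 := by rw [eLpNorm_translate, eLpNorm_translate, sq]

end Translation

theorem norm_le_div_mul_norm_ofReal_mul {m t u : ℝ} (hm : 0 < m) (ht : 0 < t) (hu : m / t ≤ u)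
    (z : ℂ) : ‖z‖ ≤ t / m * ‖(u : ℂ) * z‖ := by
  have hu' : m / t * ‖z‖ ≤ ‖(u : ℂ) * z‖ := by
    rw [norm_mul, Complex.norm_real, Real.norm_eq_abs]
    exact mul_le_mul_of_nonneg_right (hu.trans (le_abs_self u)) (norm_nonneg z)
  calc ‖z‖ = t / m * (m / t * ‖z‖) := by field_simp
    _ ≤ t / m * ‖(u : ℂ) * z‖ := by gcongr

section Rdiff

noncomputable def rdiffLinearMap (M : ℕ) (α β : Fin M) :
    EuclideanSpace ℝ (Fin M × Fin 3) →ₗ[ℝ] EuclideanSpace ℝ (Fin 3) where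
  toFun x := Rdiff M x α β
  map_add' x y := by ext j; simp only [Rdiff, PiLp.add_apply]; ring
  map_smul' c x := by ext j; simp only [Rdiff, PiLp.smul_apply, smul_eq_mul, RingHom.id_apply]; ring

variable {M : ℕ}

theorem Rdiff_sub (x y : EuclideanSpace ℝ (Fin M × Fin 3)) (α β : Fin M) :
    Rdiff M (x - y) α β = Rdiff M x α β - Rdiff M y α β :=
  map_sub (rdiffLinearMap M α β) x y

theorem continuous_Rdiff (α β : Fin M) : Continuous fun x => Rdiff M x α β :=
  (rdiffLinearMap M α β).continuous_of_finiteDimensional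

/-- The position `R_γ ∈ ℝ³` of the `γ`-th nucleus. -/
noncomputable def position (x : EuclideanSpace ℝ (Fin M × Fin 3)) (γ : Fin M) :
    EuclideanSpace ℝ (Fin 3) := WithLp.toLp 2 fun j => x (γ, j)

theorem norm_position_le (x : EuclideanSpace ℝ (Fin M × Fin 3)) (γ : Fin M) :
    ‖position x γ‖ ≤ ‖x‖ := by
  rw [EuclideanSpace.norm_eq, EuclideanSpace.norm_eq, Fintype.sum_prod_type]
  exact Real.sqrt_le_sqrt <| Finset.single_le_sum (f := fun γ' => ∑ j : Fin 3, ‖x (γ', j)‖ ^ 2)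
    (fun _ _ => Finset.sum_nonneg fun _ _ => sq_nonneg _) (Finset.mem_univ γ)

theorem norm_Rdiff_le (x : EuclideanSpace ℝ (Fin M × Fin 3)) (α β : Fin M) :
    ‖Rdiff M x α β‖ ≤ 2 * ‖x‖ := by
  have h : Rdiff M x α β = position x α - position x β := by ext j; simp [Rdiff, position]
  rw [h, two_mul]
  exact (norm_sub_le _ _).trans (add_le_add (norm_position_le x α) (norm_position_le x β))

theorem volume_Rdiff_eq_zero {α β : Fin M} (hαβ : α ≠ β) :
    volume {y : EuclideanSpace ℝ (Fin M × Fin 3) | Rdiff M y α β = 0} = 0 := by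
  refine Measure.addHaar_submodule volume (LinearMap.ker (rdiffLinearMap M α β)) fun htop => ?_
  have hker : EuclideanSpace.single (α, (0 : Fin 3)) (1 : ℝ) ∈
      LinearMap.ker (rdiffLinearMap M α β) := htop ▸ Submodule.mem_top
  have := congrArg (fun z : EuclideanSpace ℝ (Fin 3) => z 0) (LinearMap.mem_ker.1 hker)
  simp [rdiffLinearMap, Rdiff, PiLp.single_apply, hαβ.symm] at this

theorem ae_Rdiff_ne_zero :
    ∀ᵐ y : EuclideanSpace ℝ (Fin M × Fin 3), ∀ α β : Fin M, α ≠ β → Rdiff M y α β ≠ 0 := by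
  simp only [ae_all_iff, eventually_imp_distrib_left]
  exact fun α β hαβ => measure_eq_zero_iff_ae_notMem.1 (volume_Rdiff_eq_zero hαβ)

theorem isClosed_singSet (C : Fin M → Fin M → ℝ) : IsClosed (singSet M C) := by
  have h : singSet M C = ⋃ α, ⋃ β, {x | α < β ∧ 0 < C α β ∧ Rdiff M x α β = 0} := by
    ext x; simp [singSet]
  rw [h]
  exact isClosed_iUnion_of_finite fun α => isClosed_iUnion_of_finite fun β =>
    isClosed_const.inter <| isClosed_const.inter <|
      isClosed_eq (continuous_Rdiff α β) continuous_const

end Rdiff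

section CoulombBound

variable {M : ℕ} {C : Fin M → Fin M → ℝ} {m : ℝ}

theorem div_le_coulombUs (hC : ∀ α β, 0 ≤ C α β) {y : EuclideanSpace ℝ (Fin M × Fin 3)}
    {α β : Fin M} (hαβ : α < β) {t : ℝ} (hR : 0 < ‖Rdiff M y α β‖) (hRt : ‖Rdiff M y α β‖ ≤ t)
    (hmC : m ≤ C α β) : m / t ≤ coulombUs M C y :=
  calc m / t ≤ C α β / ‖Rdiff M y α β‖ := div_le_div₀ (hC α β) hmC hR hRt
    _ ≤ coulombUs M C y :=
      Finset.single_le_sum (f := fun q : Fin M × Fin M => C q.1 q.2 / ‖Rdiff M y q.1 q.2‖)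
        (fun q _ => div_nonneg (hC q.1 q.2) (norm_nonneg _))
        (Finset.mem_filter.2 ⟨Finset.mem_univ (α, β), hαβ⟩)

theorem norm_le_mul_norm_coulombUs_mul (hC : ∀ α β, 0 ≤ C α β) (hm : 0 < m)
    (hmle : ∀ α β : Fin M, α < β → 0 < C α β → m ≤ C α β)
    {w y : EuclideanSpace ℝ (Fin M × Fin 3)} (hy : y ∈ singSet M C) {r : ℝ} (hwy : dist w y ≤ r)
    (hw : ∀ α β : Fin M, α ≠ β → Rdiff M w α β ≠ 0) (z : ℂ) :
    ‖z‖ ≤ 2 * r / m * ‖(coulombUs M C w : ℂ) * z‖ := by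
  obtain ⟨α, β, hαβ, hCpos, hy0⟩ := hy
  have hR : 0 < ‖Rdiff M w α β‖ := norm_pos_iff.2 (hw α β hαβ.ne)
  have hRr : ‖Rdiff M w α β‖ ≤ 2 * r :=
    calc ‖Rdiff M w α β‖ = ‖Rdiff M (w - y) α β‖ := by rw [Rdiff_sub, hy0, sub_zero]
      _ ≤ 2 * ‖w - y‖ := norm_Rdiff_le _ α β
      _ ≤ 2 * r := by rw [← dist_eq_norm]; linarith
  exact norm_le_div_mul_norm_ofReal_mul hm (hR.trans_le hRr)
    (div_le_coulombUs hC hαβ hR hRr (hmle α β hαβ hCpos)) z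

theorem singSet_nonempty (hne : ∃ α β : Fin M, α < β ∧ 0 < C α β) : (singSet M C).Nonempty :=
  let ⟨α, β, hαβ, hCpos⟩ := hne
  ⟨0, α, β, hαβ, hCpos, map_zero (rdiffLinearMap M α β)⟩

theorem norm_le_mul_norm_coulombUs_mul_of_infDist_le (hC : ∀ α β, 0 ≤ C α β) (hm : 0 < m)
    (hmle : ∀ α β : Fin M, α < β → 0 < C α β → m ≤ C α β) (hS : (singSet M C).Nonempty)
    {x w : EuclideanSpace ℝ (Fin M × Fin 3)} {δ : ℝ} (hx : Metric.infDist x (singSet M C) ≤ δ)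
    (hw : ‖w‖ ≤ δ / 2) (hR : ∀ α β : Fin M, α ≠ β → Rdiff M (x + w) α β ≠ 0) (z : ℂ) :
    ‖z‖ ≤ 4 * δ / m * ‖(coulombUs M C (x + w) : ℂ) * z‖ := by
  obtain ⟨y, hy, hxy⟩ := (isClosed_singSet C).exists_infDist_eq_dist hS x
  have hdist : dist (x + w) y ≤ 2 * δ := by
    have := dist_triangle (x + w) x y
    rw [dist_self_add_left] at this
    linarith [norm_nonneg w, hxy ▸ hx]
  convert norm_le_mul_norm_coulombUs_mul hC hm hmle hy hdist hR z using 2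
  ring

theorem ofReal_norm_mul_norm_le_of_infDist_le (hC : ∀ α β, 0 ≤ C α β) (hm : 0 < m)
    (hmle : ∀ α β : Fin M, α < β → 0 < C α β → m ≤ C α β) (hS : (singSet M C).Nonempty)
    {x c : EuclideanSpace ℝ (Fin M × Fin 3)} {δ : ℝ} (hx : Metric.infDist x (singSet M C) ≤ δ)
    (hc : ‖c‖ ≤ δ / 2) (hplus : ∀ α β : Fin M, α ≠ β → Rdiff M (x + c) α β ≠ 0)
    (hminus : ∀ α β : Fin M, α ≠ β → Rdiff M (x - c) α β ≠ 0)
    (Ψ : EuclideanSpace ℝ (Fin M × Fin 3) → ℂ) :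
    ENNReal.ofReal (‖Ψ (x + c)‖ * ‖Ψ (x - c)‖) ≤
      ENNReal.ofReal ((4 * δ / m) ^ 2) * (‖(coulombUs M C (x + c) : ℂ) * Ψ (x + c)‖ₑ *
        ‖(coulombUs M C (x - c) : ℂ) * Ψ (x - c)‖ₑ) := by
  have hplus' := norm_le_mul_norm_coulombUs_mul_of_infDist_le hC hm hmle hS hx hc hplus (Ψ (x + c))
  have hminus' := sub_eq_add_neg x c ▸ norm_le_mul_norm_coulombUs_mul_of_infDist_le hC hm hmle hS
    hx (by rwa [norm_neg]) (sub_eq_add_neg x c ▸ hminus) (Ψ (x - c))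
  rw [← ofReal_norm, ← ofReal_norm, ← ENNReal.ofReal_mul (by positivity),
    ← ENNReal.ofReal_mul (by positivity)]
  refine ENNReal.ofReal_le_ofReal ?_
  calc ‖Ψ (x + c)‖ * ‖Ψ (x - c)‖
      ≤ (4 * δ / m * ‖(coulombUs M C (x + c) : ℂ) * Ψ (x + c)‖) *
          (4 * δ / m * ‖(coulombUs M C (x - c) : ℂ) * Ψ (x - c)‖) :=
        mul_le_mul hplus' hminus' (norm_nonneg _) ((norm_nonneg _).trans hplus')
    _ = _ := by ring

end CoulombBound

theorem coulomb_nonlocal_no_concentration_general (M : ℕ) (C : Fin M → Fin M → ℝ)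
    (hC : ∀ α β : Fin M, 0 ≤ C α β)
    (hne : ∃ α β : Fin M, α < β ∧ 0 < C α β)
    (m : ℝ) (hm : 0 < m)
    (hmle : ∀ α β : Fin M, α < β → 0 < C α β → m ≤ C α β)
    (Ψ : EuclideanSpace ℝ (Fin M × Fin 3) → ℂ)
    (hUsΨ : MemLp (fun x => (coulombUs M C x : ℂ) * Ψ x) 2
      (volume : Measure (EuclideanSpace ℝ (Fin M × Fin 3))))
    (δ : ℝ) (v : EuclideanSpace ℝ (Fin M × Fin 3)) (hv : ‖v‖ ≤ δ) :
    ∫⁻ x in {x | Metric.infDist x (singSet M C) ≤ δ},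
        ENNReal.ofReal (‖Ψ (x + (2 : ℝ)⁻¹ • v)‖ * ‖Ψ (x - (2 : ℝ)⁻¹ • v)‖)
      ≤ ENNReal.ofReal ((16 / m ^ 2) * δ ^ 2 *
          (eLpNorm (fun x => (coulombUs M C x : ℂ) * Ψ x) 2 volume).toReal ^ 2) := by
  set c := (2 : ℝ)⁻¹ • v
  set f := fun x => (coulombUs M C x : ℂ) * Ψ x
  set A := {x | Metric.infDist x (singSet M C) ≤ δ}
  have hc : ‖c‖ ≤ δ / 2 := by rw [norm_smul]; norm_num; linarith
  have hA : MeasurableSet A :=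
    (isClosed_le (Metric.continuous_infDist_pt _) continuous_const).measurableSet
  have hpointwise : ∀ᵐ x, x ∈ A → ENNReal.ofReal (‖Ψ (x + c)‖ * ‖Ψ (x - c)‖) ≤
      ENNReal.ofReal ((4 * δ / m) ^ 2) * (‖f (x + c)‖ₑ * ‖f (x - c)‖ₑ) := by
    filter_upwards [(measurePreserving_add_right volume c).quasiMeasurePreserving.ae
      ae_Rdiff_ne_zero, (measurePreserving_sub_right volume c).quasiMeasurePreserving.ae
      ae_Rdiff_ne_zero] with x hplus hminus hx
    exact ofReal_norm_mul_norm_le_of_infDist_le hC hm hmle (singSet_nonempty hne) hx hc hplus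
      hminus Ψ
  calc _ ≤ ∫⁻ x in A, ENNReal.ofReal ((4 * δ / m) ^ 2) * (‖f (x + c)‖ₑ * ‖f (x - c)‖ₑ) :=
        lintegral_mono_ae ((ae_restrict_iff' hA).2 hpointwise)
    _ ≤ ENNReal.ofReal ((4 * δ / m) ^ 2) * ∫⁻ x, ‖f (x + c)‖ₑ * ‖f (x - c)‖ₑ :=
        (setLIntegral_le_lintegral _ _).trans_eq (lintegral_const_mul' _ _ ENNReal.ofReal_ne_top)
    _ ≤ ENNReal.ofReal ((4 * δ / m) ^ 2) * eLpNorm f 2 volume ^ 2 := by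
        gcongr
        simpa only [sub_eq_add_neg] using
          lintegral_enorm_comp_add_mul_le_eLpNorm_sq hUsΨ.1 c (-c)
    _ = _ := by
        rw [ENNReal.ofReal_mul (by positivity), ENNReal.ofReal_pow ENNReal.toReal_nonneg,
          ENNReal.ofReal_toReal hUsΨ.eLpNorm_ne_top]
        congr 2
        ring

/-- Non-local no-concentration estimate at the Coulomb singularities: for
`|v| ≤ δ`, `∫_{dist(x,S)≤δ} |Ψ(x+v/2)||Ψ(x−v/2)| dx ≤ (16/m²) δ² ‖U_sΨ‖²`,
where `m` is a (positive) lower bound for the nonzero coefficients `C_{αβ}` —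
in particular one may take `m = min{C_{αβ} : C_{αβ} > 0}`. -/
theorem coulomb_nonlocal_no_concentration (M : ℕ) (hM : 2 ≤ M) (C : Fin M → Fin M → ℝ)
    (hC : ∀ α β : Fin M, 0 ≤ C α β)
    (hne : ∃ α β : Fin M, α < β ∧ 0 < C α β)
    (m : ℝ) (hm : 0 < m)
    (hmle : ∀ α β : Fin M, α < β → 0 < C α β → m ≤ C α β)
    (Ψ : EuclideanSpace ℝ (Fin M × Fin 3) → ℂ)
    (hΨ : MemLp Ψ 2 (volume : Measure (EuclideanSpace ℝ (Fin M × Fin 3))))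
    (hUsΨ : MemLp (fun x => (coulombUs M C x : ℂ) * Ψ x) 2
      (volume : Measure (EuclideanSpace ℝ (Fin M × Fin 3))))
    (δ : ℝ) (hδ : 0 < δ) (v : EuclideanSpace ℝ (Fin M × Fin 3)) (hv : ‖v‖ ≤ δ) :
    ∫⁻ x in {x | Metric.infDist x (singSet M C) ≤ δ},
        ENNReal.ofReal (‖Ψ (x + (2 : ℝ)⁻¹ • v)‖ * ‖Ψ (x - (2 : ℝ)⁻¹ • v)‖)
      ≤ ENNReal.ofReal ((16 / m ^ 2) * δ ^ 2 *
          (eLpNorm (fun x => (coulombUs M C x : ℂ) * Ψ x) 2 volume).toReal ^ 2) :=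
  coulomb_nonlocal_no_concentration_general M C hC hne m hm hmle Ψ hUsΨ δ v hv
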